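/- arXiv:2505.03526 — 6 statements merged into one kernel-verified Lean document; each statement's English description precedes it below -/
import Mathlib

section
/- Let M be a common sufficient adjustment set, i.e., E(Y_t^0 | A, M) = E(Y_t^0 | M) a.s. for t = 0, 1. If additive homogeneous confounding holds, i.e., E(Y1^0 - Y0^0 | M) = E(Y1^0 - Y0^0) a.s., then parallel trends holds: E(Y1^0 - Y0^0 | A) = E(Y1^0 - Y0^0) a.s. -/
/-!
By sufficiency, `E(Y1 - Y0 | A, M) = E(Y1 - Y0 | M)`, which is constant by additive homogeneous
confounding. Since `σ(A) ⊆ σ(A, M)`, the tower property carries this constant down to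
`E(Y1 - Y0 | A)`.
-/

open MeasureTheory

section

variable {Ω E : Type*} {m₀ : MeasurableSpace Ω} {μ : Measure Ω}
  [NormedAddCommGroup E] [NormedSpace ℝ E] [CompleteSpace E]

theorem condExp_sub_ae_eq_of_ae_eq {m m' : MeasurableSpace Ω} {f g : Ω → E}
    (hf : Integrable f μ) (hg : Integrable g μ)
    (hfm : μ[f | m] =ᵐ[μ] μ[f | m']) (hgm : μ[g | m] =ᵐ[μ] μ[g | m']) :
    μ[f - g | m] =ᵐ[μ] μ[f - g | m'] :=
  (condExp_sub hf hg m).trans ((hfm.sub hgm).trans (condExp_sub hf hg m').symm)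

theorem condExp_ae_eq_const_of_le [IsFiniteMeasure μ] {m₁ m₂ : MeasurableSpace Ω}
    (h₁₂ : m₁ ≤ m₂) (h₂ : m₂ ≤ m₀) {f : Ω → E} {c : E}
    (hf : μ[f | m₂] =ᵐ[μ] fun _ => c) :
    μ[f | m₁] =ᵐ[μ] fun _ => c :=
  calc μ[f | m₁] =ᵐ[μ] μ[μ[f | m₂] | m₁] := (condExp_condExp_of_le h₁₂ h₂).symm
    _ =ᵐ[μ] μ[fun _ => c | m₁] := condExp_congr_ae hf
    _ = fun _ => c := condExp_const (h₁₂.trans h₂) c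

end

theorem stmt_4_general {Ω : Type*} [MeasurableSpace Ω] {β : Type*} [MeasurableSpace β]
    (μ : Measure Ω) [IsProbabilityMeasure μ]
    (A Y0 Y1 : Ω → ℝ) (M : Ω → β)
    (hAmeas : Measurable A) (hMmeas : Measurable M)
    (hY0 : Integrable Y0 μ) (hY1 : Integrable Y1 μ)
    (hsuff0 : μ[Y0 | MeasurableSpace.comap (fun ω => (A ω, M ω)) inferInstance]
        =ᵐ[μ] μ[Y0 | MeasurableSpace.comap M inferInstance])
    (hsuff1 : μ[Y1 | MeasurableSpace.comap (fun ω => (A ω, M ω)) inferInstance]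
        =ᵐ[μ] μ[Y1 | MeasurableSpace.comap M inferInstance])
    (hAHC : μ[fun ω => Y1 ω - Y0 ω | MeasurableSpace.comap M inferInstance]
        =ᵐ[μ] fun _ => ∫ ω, (Y1 ω - Y0 ω) ∂μ) :
    μ[fun ω => Y1 ω - Y0 ω | MeasurableSpace.comap A inferInstance]
        =ᵐ[μ] fun _ => ∫ ω, (Y1 ω - Y0 ω) ∂μ := by
  have hA_le_AM : MeasurableSpace.comap A inferInstance
      ≤ MeasurableSpace.comap (fun ω => (A ω, M ω)) inferInstance :=
    MeasurableSpace.comap_le_comap_of_eq_comp Prod.fst measurable_fst rfl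
  have hAM_const : μ[Y1 - Y0 | MeasurableSpace.comap (fun ω => (A ω, M ω)) inferInstance]
      =ᵐ[μ] fun _ => ∫ ω, (Y1 ω - Y0 ω) ∂μ :=
    (condExp_sub_ae_eq_of_ae_eq hY1 hY0 hsuff1 hsuff0).trans hAHC
  exact condExp_ae_eq_const_of_le hA_le_AM (hAmeas.prodMk hMmeas).comap_le hAM_const

/-- If `M` is a common sufficient adjustment set,
`E(Y_t^0 | A, M) = E(Y_t^0 | M)` a.s. for `t = 0,1`, and additive homogeneous
confounding holds, `E(Y1^0 - Y0^0 | M) = E(Y1^0 - Y0^0)` a.s., then parallel trends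
holds: `E(Y1^0 - Y0^0 | A) = E(Y1^0 - Y0^0)` a.s. -/
theorem stmt_4 {Ω : Type*} [MeasurableSpace Ω] {β : Type*} [MeasurableSpace β]
    (μ : Measure Ω) [IsProbabilityMeasure μ]
    (A Y0 Y1 : Ω → ℝ) (M : Ω → β)
    (hAmeas : Measurable A) (hAbin : ∀ ω, A ω = 0 ∨ A ω = 1) (hMmeas : Measurable M)
    (hY0 : Integrable Y0 μ) (hY1 : Integrable Y1 μ)
    (hsuff0 : μ[Y0 | MeasurableSpace.comap (fun ω => (A ω, M ω)) inferInstance]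
        =ᵐ[μ] μ[Y0 | MeasurableSpace.comap M inferInstance])
    (hsuff1 : μ[Y1 | MeasurableSpace.comap (fun ω => (A ω, M ω)) inferInstance]
        =ᵐ[μ] μ[Y1 | MeasurableSpace.comap M inferInstance])
    (hAHC : μ[fun ω => Y1 ω - Y0 ω | MeasurableSpace.comap M inferInstance]
        =ᵐ[μ] fun _ => ∫ ω, (Y1 ω - Y0 ω) ∂μ) :
    μ[fun ω => Y1 ω - Y0 ω | MeasurableSpace.comap A inferInstance]
        =ᵐ[μ] fun _ => ∫ ω, (Y1 ω - Y0 ω) ∂μ :=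
  stmt_4_general μ A Y0 Y1 M hAmeas hMmeas hY0 hY1 hsuff0 hsuff1 hAHC
end

section
/- Let M be a common sufficient set: E(Y_t^0 | A, M) = E(Y_t^0 | M) a.s. for t=0,1, and suppose additive homogeneous confounding holds: E(Y1^0 - Y0^0 | A, M) = E(Y1^0 - Y0^0) a.s. Let M0 be a measurable function of M that is sufficient for Y0: E(Y0^0 | A, M0) = E(Y0^0 | M0) a.s. Then M0 is also sufficient for Y1: E(Y1^0 | A, M0) = E(Y1^0 | M0) a.s. -/
open MeasureTheory


/-- Tower property: if `E(f | mBig) = c` a.s. and `m ≤ mBig ≤ ambient`, then `E(f | m) = c` a.s. -/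
lemma aux_condexp_const_of_le {Ω : Type*} [mΩ : MeasurableSpace Ω] (μ : Measure Ω) [IsFiniteMeasure μ]
    {f : Ω → ℝ} {c : ℝ} {m mBig : MeasurableSpace Ω} (hmle : m ≤ mBig) (hBig : mBig ≤ mΩ)
    (h : μ[f | mBig] =ᵐ[μ] fun _ => c) : μ[f | m] =ᵐ[μ] fun _ => c := by
  have h1 : μ[f | m] =ᵐ[μ] μ[μ[f | mBig] | m] := (condExp_condExp_of_le hmle hBig).symm
  have h2 : μ[μ[f | mBig] | m] =ᵐ[μ] μ[(fun _ => c) | m] := condExp_congr_ae h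
  have h3 : μ[(fun _ : Ω => c) | m] = fun _ => c := condExp_const (hmle.trans hBig) c
  exact h1.trans (h2.trans (by rw [h3]))

/-- Let `M` be a common sufficient set, suppose additive homogeneous
confounding holds in the form `E(Y1^0 - Y0^0 | A, M) = E(Y1^0 - Y0^0)` a.s., and let
`M0` be a measurable function of `M` that is sufficient for `Y0`. Then `M0` is also
sufficient for `Y1`: `E(Y1^0 | A, M0) = E(Y1^0 | M0)` a.s. -/
theorem stmt_11 {Ω : Type*} [MeasurableSpace Ω] {β γ : Type*} [MeasurableSpace β]
    [MeasurableSpace γ] (μ : Measure Ω) [IsProbabilityMeasure μ]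
    (A Y0 Y1 : Ω → ℝ) (M : Ω → β) (M0 : Ω → γ)
    (hAmeas : Measurable A) (hMmeas : Measurable M) (hM0meas : Measurable M0)
    (hY0 : Integrable Y0 μ) (hY1 : Integrable Y1 μ)
    (hsub : MeasurableSpace.comap M0 inferInstance ≤ MeasurableSpace.comap M inferInstance)
    (hsubAM : MeasurableSpace.comap (fun ω => (A ω, M0 ω)) inferInstance
        ≤ MeasurableSpace.comap (fun ω => (A ω, M ω)) inferInstance)
    -- M is a common sufficient adjustment set
    (hsuff0 : μ[Y0 | MeasurableSpace.comap (fun ω => (A ω, M ω)) inferInstance]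
        =ᵐ[μ] μ[Y0 | MeasurableSpace.comap M inferInstance])
    (hsuff1 : μ[Y1 | MeasurableSpace.comap (fun ω => (A ω, M ω)) inferInstance]
        =ᵐ[μ] μ[Y1 | MeasurableSpace.comap M inferInstance])
    -- additive homogeneous confounding given (A, M)
    (hAHC : μ[fun ω => Y1 ω - Y0 ω | MeasurableSpace.comap (fun ω => (A ω, M ω)) inferInstance]
        =ᵐ[μ] fun _ => ∫ ω, (Y1 ω - Y0 ω) ∂μ)
    -- M0 is sufficient for Y0
    (hsuffM0 : μ[Y0 | MeasurableSpace.comap (fun ω => (A ω, M0 ω)) inferInstance]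
        =ᵐ[μ] μ[Y0 | MeasurableSpace.comap M0 inferInstance]) :
    μ[Y1 | MeasurableSpace.comap (fun ω => (A ω, M0 ω)) inferInstance]
        =ᵐ[μ] μ[Y1 | MeasurableSpace.comap M0 inferInstance] := by
  have hm1le : MeasurableSpace.comap (fun ω => (A ω, M0 ω)) inferInstance
      ≤ ‹MeasurableSpace Ω› := (hAmeas.prodMk hM0meas).comap_le
  have hmAMle : MeasurableSpace.comap (fun ω => (A ω, M ω)) inferInstance
      ≤ ‹MeasurableSpace Ω› := (hAmeas.prodMk hMmeas).comap_le
  have hm0m1 : MeasurableSpace.comap M0 inferInstance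
      ≤ MeasurableSpace.comap (fun ω => (A ω, M0 ω)) inferInstance := by
    have : MeasurableSpace.comap M0 (inferInstance : MeasurableSpace γ)
        = MeasurableSpace.comap (fun ω => (A ω, M0 ω))
          (MeasurableSpace.comap Prod.snd inferInstance) := by
      rw [MeasurableSpace.comap_comp]; rfl
    rw [this]
    exact MeasurableSpace.comap_mono measurable_snd.comap_le
  have key1 := aux_condexp_const_of_le μ hsubAM hmAMle hAHC
  have key0 := aux_condexp_const_of_le μ (hm0m1.trans hsubAM) hmAMle hAHC
  have hsplit1 := (condExp_sub hY1 hY0 (m := MeasurableSpace.comap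
      (fun ω => (A ω, M0 ω)) inferInstance)).symm.trans key1
  have hsplit0 := (condExp_sub hY1 hY0 (m := MeasurableSpace.comap
      M0 inferInstance)).symm.trans key0
  filter_upwards [hsplit1, hsplit0, hsuffM0] with ω h1 h0 hM0
  have h1' : (μ[Y1 | MeasurableSpace.comap (fun ω => (A ω, M0 ω)) inferInstance]) ω
      - (μ[Y0 | MeasurableSpace.comap (fun ω => (A ω, M0 ω)) inferInstance]) ω
      = ∫ ω, (Y1 ω - Y0 ω) ∂μ := h1
  have h0' : (μ[Y1 | MeasurableSpace.comap M0 inferInstance]) ω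
      - (μ[Y0 | MeasurableSpace.comap M0 inferInstance]) ω
      = ∫ ω, (Y1 ω - Y0 ω) ∂μ := h0
  linarith [hM0, h1', h0']
end

section
/- Consider the additively separable model Y1^{0,G1'} = Y1^{0,G0} + h(Y0) for a measurable function h. If additive homogeneous confounding holds in both G0 and G1' with respect to a common sufficient set M, then E[h(Y0) - E(h(Y0)) | M] = 0 a.s.; i.e., h(Y0) is conditionally mean-independent of M. -/
open MeasureTheory

/-- For the additively separable model `Y1^{0,G1'} = Y1^{0,G0} + h(Y0)`,
if additive homogeneous confounding holds in both `G0` and `G1'` with respect to a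
common sufficient set `M`, then `E[h(Y0) - E(h(Y0)) | M] = 0` a.s. -/
theorem stmt_13 {Ω : Type*} [MeasurableSpace Ω] {β : Type*} [MeasurableSpace β]
    (μ : Measure Ω) [IsProbabilityMeasure μ]
    (Y0 Y1G0 : Ω → ℝ) (M : Ω → β) (hMmeas : Measurable M)
    (h : ℝ → ℝ) (hhmeas : Measurable h)
    (hY0 : Integrable Y0 μ) (hY1G0 : Integrable Y1G0 μ)
    (hhint : Integrable (fun ω => h (Y0 ω)) μ)
    (Y1G1' : Ω → ℝ) (hG1' : Y1G1' = fun ω => Y1G0 ω + h (Y0 ω))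
    -- additive homogeneous confounding in G0
    (hAHC0 : μ[fun ω => Y1G0 ω - Y0 ω | MeasurableSpace.comap M inferInstance]
        =ᵐ[μ] fun _ => ∫ ω, (Y1G0 ω - Y0 ω) ∂μ)
    -- additive homogeneous confounding in G1'
    (hAHC1 : μ[fun ω => Y1G1' ω - Y0 ω | MeasurableSpace.comap M inferInstance]
        =ᵐ[μ] fun _ => ∫ ω, (Y1G1' ω - Y0 ω) ∂μ) :
    μ[fun ω => h (Y0 ω) - ∫ x, h (Y0 x) ∂μ | MeasurableSpace.comap M inferInstance]
      =ᵐ[μ] 0 := by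
  subst hG1'
  set m := MeasurableSpace.comap M inferInstance with hm
  have hint1 : Integrable (fun ω => Y1G0 ω + h (Y0 ω) - Y0 ω) μ := (hY1G0.add hhint).sub hY0
  have hint2 : Integrable (fun ω => Y1G0 ω - Y0 ω) μ := hY1G0.sub hY0
  have hdiff : (fun ω => (Y1G0 ω + h (Y0 ω) - Y0 ω) - (Y1G0 ω - Y0 ω)) = fun ω => h (Y0 ω) := by
    funext ω; ring
  have hEh : μ[fun ω => h (Y0 ω) | m] =ᵐ[μ] fun _ => ∫ x, h (Y0 x) ∂μ := by
    have hsub := condExp_sub (m := m) (μ := μ) hint1 hint2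
    simp only [Pi.sub_def] at hsub
    rw [hdiff] at hsub
    refine hsub.trans ?_
    filter_upwards [hAHC0, hAHC1] with ω h0 h1
    simp only [Pi.sub_apply, h0, h1]
    rw [← integral_sub hint1 hint2, hdiff]
  have hc : Integrable (fun _ : Ω => ∫ x, h (Y0 x) ∂μ) μ := integrable_const _
  have := condExp_sub (m := m) (μ := μ) hhint hc
  refine this.trans ?_
  have hcc := condExp_const (μ := μ) (m := m) hMmeas.comap_le (∫ x, h (Y0 x) ∂μ)
  filter_upwards [hEh] with ω h1
  simp [h1, hcc]
end

section
/- If M is a sufficient adjustment set in the sense of conditional independence Y1^0 ⫫ A | M (not just mean-independence), and additive homogeneous confounding holds for (Y0^0, Y1^0) given M, then the ATT identification formula holds: E(Y1^1 - Y1^0 | A=1) = [E(Y1 | A=1) - E(Y0 | A=1)] - [E(Y1 | A=0) - E(Y0 | A=0)], assuming no anticipation (Y0 = Y0^0) and causal consistency (A=0 implies Y1 = Y1^0; A=1 implies Y1 = Y1^1). -/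
/-!
Mean sufficiency of `M` lets the conditional mean of `Y1^0 - Y0^0` given `(A, M)` be computed
given `M` alone, where additive homogeneous confounding makes it the constant
`c = E(Y1^0 - Y0^0)`. Integrating over the `σ(A, M)`-measurable events `{A = 1}` and `{A = 0}`
yields parallel trends: `E(Y1^0 - Y0^0 | A = a) = c` for both arms. Consistency and no
anticipation turn the `A = 0` trend into observables and the `A = 1` trend into the
counterfactual term of the ATT.
-/

open MeasureTheory ProbabilityTheory

section ConstantConditionalMean

variable {Ω : Type*} {m mΩ : MeasurableSpace Ω} {μ : Measure Ω} {X Y : Ω → ℝ} {c : ℝ}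

theorem condExp_sub_ae_eq_const_of_condExp_ae_eq {m' : MeasurableSpace Ω}
    (hX : Integrable X μ) (hY : Integrable Y μ)
    (hXm : μ[X | m'] =ᵐ[μ] μ[X | m]) (hYm : μ[Y | m'] =ᵐ[μ] μ[Y | m])
    (hc : μ[X - Y | m] =ᵐ[μ] fun _ => c) :
    μ[X - Y | m'] =ᵐ[μ] fun _ => c :=
  calc μ[X - Y | m'] =ᵐ[μ] μ[X | m'] - μ[Y | m'] := condExp_sub hX hY m'
    _ =ᵐ[μ] μ[X | m] - μ[Y | m] := hXm.sub hYm
    _ =ᵐ[μ] μ[X - Y | m] := (condExp_sub hX hY m).symm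
    _ =ᵐ[μ] fun _ => c := hc

variable [IsFiniteMeasure μ]

theorem setIntegral_sub_eq_mul_of_condExp_ae_eq_const (hm : m ≤ mΩ)
    (hX : Integrable X μ) (hY : Integrable Y μ) (hc : μ[X - Y | m] =ᵐ[μ] fun _ => c)
    {s : Set Ω} (hs : MeasurableSet[m] s) :
    (∫ ω in s, X ω ∂μ) - ∫ ω in s, Y ω ∂μ = c * (μ s).toReal := by
  calc (∫ ω in s, X ω ∂μ) - ∫ ω in s, Y ω ∂μ
      = ∫ ω in s, (X - Y) ω ∂μ := (integral_sub hX.integrableOn hY.integrableOn).symm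
    _ = ∫ ω in s, (μ[X - Y | m]) ω ∂μ := (setIntegral_condExp hm (hX.sub hY) hs).symm
    _ = ∫ _ in s, c ∂μ := integral_congr_ae (ae_restrict_of_ae hc)
    _ = c * (μ s).toReal := by rw [setIntegral_const, smul_eq_mul, mul_comm, Measure.real]

theorem setAverage_sub_eq_of_condExp_ae_eq_const (hm : m ≤ mΩ)
    (hX : Integrable X μ) (hY : Integrable Y μ) (hc : μ[X - Y | m] =ᵐ[μ] fun _ => c)
    {s : Set Ω} (hs : MeasurableSet[m] s) (hμs : μ s ≠ 0) :
    (∫ ω in s, X ω ∂μ) / (μ s).toReal - (∫ ω in s, Y ω ∂μ) / (μ s).toReal = c := by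
  rw [← sub_div, setIntegral_sub_eq_mul_of_condExp_ae_eq_const hm hX hY hc hs,
    mul_div_cancel_right₀ _ (ENNReal.toReal_ne_zero.mpr ⟨hμs, measure_ne_top μ s⟩)]

end ConstantConditionalMean

theorem measure_setOf_eq_zero_ne_zero_of_binary {Ω : Type*} {mΩ : MeasurableSpace Ω}
    {μ : Measure Ω} [IsProbabilityMeasure μ] {A : Ω → ℝ} (hAmeas : Measurable A)
    (hAbin : ∀ ω, A ω = 0 ∨ A ω = 1) (hlt : μ {ω | A ω = 1} < 1) :
    μ {ω | A ω = 0} ≠ 0 := by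
  have hcompl : {ω | A ω = 0} = {ω | A ω = 1}ᶜ := by
    ext ω
    rcases hAbin ω with h | h <;> simp [h]
  rw [hcompl, prob_compl_eq_one_sub (s := {ω | A ω = 1}) (hAmeas (measurableSet_singleton 1))]
  exact (tsub_pos_of_lt hlt).ne'

theorem stmt_15_general {Ω : Type*} {mΩ : MeasurableSpace Ω}
    {β : Type*} [MeasurableSpace β]
    (μ : Measure Ω) [IsProbabilityMeasure μ]
    (A Y0 Y1 Y0p0 Y1p0 Y1p1 : Ω → ℝ) (M : Ω → β) (hMmeas : Measurable M)
    (hAmeas : Measurable A) (hAbin : ∀ ω, A ω = 0 ∨ A ω = 1)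
    (hpos : 0 < μ {ω | A ω = 1}) (hlt : μ {ω | A ω = 1} < 1)
    (hY0p0 : Integrable Y0p0 μ) (hY1p0 : Integrable Y1p0 μ) (hY1p1 : Integrable Y1p1 μ)
    -- mean sufficiency for both time points
    (hsuff0 : μ[Y0p0 | MeasurableSpace.comap (fun ω => (A ω, M ω)) inferInstance]
        =ᵐ[μ] μ[Y0p0 | MeasurableSpace.comap M inferInstance])
    (hsuff1 : μ[Y1p0 | MeasurableSpace.comap (fun ω => (A ω, M ω)) inferInstance]
        =ᵐ[μ] μ[Y1p0 | MeasurableSpace.comap M inferInstance])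
    -- additive homogeneous confounding
    (hAHC : μ[fun ω => Y1p0 ω - Y0p0 ω | MeasurableSpace.comap M inferInstance]
        =ᵐ[μ] fun _ => ∫ ω, (Y1p0 ω - Y0p0 ω) ∂μ)
    -- no anticipation and causal consistency
    (hNA : ∀ ω, Y0 ω = Y0p0 ω)
    (hCons0 : ∀ ω, A ω = 0 → Y1 ω = Y1p0 ω)
    (hCons1 : ∀ ω, A ω = 1 → Y1 ω = Y1p1 ω) :
    (∫ ω in {ω | A ω = 1}, (Y1p1 ω - Y1p0 ω) ∂μ) / (μ {ω | A ω = 1}).toReal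
      = ((∫ ω in {ω | A ω = 1}, Y1 ω ∂μ) / (μ {ω | A ω = 1}).toReal
          - (∫ ω in {ω | A ω = 1}, Y0 ω ∂μ) / (μ {ω | A ω = 1}).toReal)
        - ((∫ ω in {ω | A ω = 0}, Y1 ω ∂μ) / (μ {ω | A ω = 0}).toReal
          - (∫ ω in {ω | A ω = 0}, Y0 ω ∂μ) / (μ {ω | A ω = 0}).toReal) := by
  have hm : MeasurableSpace.comap (fun ω => (A ω, M ω)) inferInstance ≤ mΩ :=
    MeasurableSpace.comap_le_iff_le_map.mpr (hAmeas.prodMk hMmeas).le_map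
  have hAM : Measurable[MeasurableSpace.comap (fun ω => (A ω, M ω)) inferInstance] A :=
    measurable_fst.comp (comap_measurable _)
  have hconst := condExp_sub_ae_eq_const_of_condExp_ae_eq hY1p0 hY0p0 hsuff1 hsuff0 hAHC
  have htrend1 := setAverage_sub_eq_of_condExp_ae_eq_const hm hY1p0 hY0p0 hconst
    (s := {ω | A ω = 1}) (hAM (measurableSet_singleton 1)) hpos.ne'
  have htrend0 := setAverage_sub_eq_of_condExp_ae_eq_const hm hY1p0 hY0p0 hconst
    (s := {ω | A ω = 0}) (hAM (measurableSet_singleton 0))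
    (measure_setOf_eq_zero_ne_zero_of_binary hAmeas hAbin hlt)
  have hS1 : MeasurableSet {ω | A ω = 1} := hAmeas (measurableSet_singleton 1)
  have hS0 : MeasurableSet {ω | A ω = 0} := hAmeas (measurableSet_singleton 0)
  rw [setIntegral_congr_fun hS1 hCons1, setIntegral_congr_fun hS0 hCons0,
    integral_sub hY1p1.integrableOn hY1p0.integrableOn, sub_div]
  simp only [hNA]
  linarith

/-- If `M` is a sufficient adjustment set in the conditional-independence
sense `Y1^0 ⫫ A | M`, additive homogeneous confounding holds for `(Y0^0, Y1^0)` given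
`M`, no anticipation (`Y0 = Y0^0`) and causal consistency hold, then the ATT
identification formula holds. -/
theorem stmt_15 {Ω : Type*} {mΩ : MeasurableSpace Ω} [StandardBorelSpace Ω]
    {β : Type*} [MeasurableSpace β]
    (μ : Measure Ω) [IsProbabilityMeasure μ]
    (A Y0 Y1 Y0p0 Y1p0 Y1p1 : Ω → ℝ) (M : Ω → β) (hMmeas : Measurable M)
    (hAmeas : Measurable A) (hAbin : ∀ ω, A ω = 0 ∨ A ω = 1)
    (hpos : 0 < μ {ω | A ω = 1}) (hlt : μ {ω | A ω = 1} < 1)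
    (hY0int : Integrable Y0 μ) (hY1int : Integrable Y1 μ)
    (hY0p0 : Integrable Y0p0 μ) (hY1p0 : Integrable Y1p0 μ) (hY1p1 : Integrable Y1p1 μ)
    -- conditional independence Y1^0 ⫫ A | M
    (hCI : CondIndepFun (MeasurableSpace.comap M inferInstance)
      (MeasurableSpace.comap_le_iff_le_map.mpr hMmeas.le_map) Y1p0 A μ)
    -- mean sufficiency for both time points
    (hsuff0 : μ[Y0p0 | MeasurableSpace.comap (fun ω => (A ω, M ω)) inferInstance]
        =ᵐ[μ] μ[Y0p0 | MeasurableSpace.comap M inferInstance])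
    (hsuff1 : μ[Y1p0 | MeasurableSpace.comap (fun ω => (A ω, M ω)) inferInstance]
        =ᵐ[μ] μ[Y1p0 | MeasurableSpace.comap M inferInstance])
    -- additive homogeneous confounding
    (hAHC : μ[fun ω => Y1p0 ω - Y0p0 ω | MeasurableSpace.comap M inferInstance]
        =ᵐ[μ] fun _ => ∫ ω, (Y1p0 ω - Y0p0 ω) ∂μ)
    -- no anticipation and causal consistency
    (hNA : ∀ ω, Y0 ω = Y0p0 ω)
    (hCons0 : ∀ ω, A ω = 0 → Y1 ω = Y1p0 ω)
    (hCons1 : ∀ ω, A ω = 1 → Y1 ω = Y1p1 ω) :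
    (∫ ω in {ω | A ω = 1}, (Y1p1 ω - Y1p0 ω) ∂μ) / (μ {ω | A ω = 1}).toReal
      = ((∫ ω in {ω | A ω = 1}, Y1 ω ∂μ) / (μ {ω | A ω = 1}).toReal
          - (∫ ω in {ω | A ω = 1}, Y0 ω ∂μ) / (μ {ω | A ω = 1}).toReal)
        - ((∫ ω in {ω | A ω = 0}, Y1 ω ∂μ) / (μ {ω | A ω = 0}).toReal
          - (∫ ω in {ω | A ω = 0}, Y0 ω ∂μ) / (μ {ω | A ω = 0}).toReal) :=
  stmt_15_general (mΩ := mΩ) μ A Y0 Y1 Y0p0 Y1p0 Y1p1 M hMmeas hAmeas hAbin hpos hlt hY0p0 hY1p0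
    hY1p1 hsuff0 hsuff1 hAHC hNA hCons0 hCons1
end

section
/- Under parallel trends, no anticipation (Y0 = Y0^0), and causal consistency (Y1 = A·Y1^1 + (1-A)·Y1^0), the ATT is identified: E(Y1^1 - Y1^0 | A=1) = [E(Y1 - Y0 | A=1)] - [E(Y1 - Y0 | A=0)]. -/
open MeasureTheory

/-- Under parallel trends, no anticipation (`Y0 = Y0^0`) and causal
consistency (`Y1 = A·Y1^1 + (1-A)·Y1^0`), the ATT is identified:
`E(Y1^1 - Y1^0 | A=1) = E(Y1 - Y0 | A=1) - E(Y1 - Y0 | A=0)`. -/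
theorem stmt_16 {Ω : Type*} [MeasurableSpace Ω] (μ : Measure Ω) [IsProbabilityMeasure μ]
    (A Y0 Y1 Y0p0 Y1p0 Y1p1 : Ω → ℝ)
    (hAmeas : Measurable A) (hAbin : ∀ ω, A ω = 0 ∨ A ω = 1)
    (hpos : 0 < μ {ω | A ω = 1}) (hlt : μ {ω | A ω = 1} < 1)
    (hY0p0 : Integrable Y0p0 μ) (hY1p0 : Integrable Y1p0 μ) (hY1p1 : Integrable Y1p1 μ)
    -- parallel trends
    (hPT : (∫ ω in {ω | A ω = 1}, (Y1p0 ω - Y0p0 ω) ∂μ) / (μ {ω | A ω = 1}).toReal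
         = (∫ ω in {ω | A ω = 0}, (Y1p0 ω - Y0p0 ω) ∂μ) / (μ {ω | A ω = 0}).toReal)
    -- no anticipation
    (hNA : ∀ ω, Y0 ω = Y0p0 ω)
    -- causal consistency
    (hCons : ∀ ω, Y1 ω = A ω * Y1p1 ω + (1 - A ω) * Y1p0 ω) :
    (∫ ω in {ω | A ω = 1}, (Y1p1 ω - Y1p0 ω) ∂μ) / (μ {ω | A ω = 1}).toReal
      = (∫ ω in {ω | A ω = 1}, (Y1 ω - Y0 ω) ∂μ) / (μ {ω | A ω = 1}).toReal
        - (∫ ω in {ω | A ω = 0}, (Y1 ω - Y0 ω) ∂μ) / (μ {ω | A ω = 0}).toReal := by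
  have hm1 : MeasurableSet {ω | A ω = 1} := hAmeas (measurableSet_singleton 1)
  have hm0 : MeasurableSet {ω | A ω = 0} := hAmeas (measurableSet_singleton 0)
  have h1 : (∫ ω in {ω | A ω = 1}, (Y1 ω - Y0 ω) ∂μ)
      = ∫ ω in {ω | A ω = 1}, (Y1p1 ω - Y0p0 ω) ∂μ := by
    refine setIntegral_congr_fun hm1 (fun ω hω => ?_)
    simp only [Set.mem_setOf_eq] at hω
    rw [hCons, hNA, hω]; ring
  have h0 : (∫ ω in {ω | A ω = 0}, (Y1 ω - Y0 ω) ∂μ)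
      = ∫ ω in {ω | A ω = 0}, (Y1p0 ω - Y0p0 ω) ∂μ := by
    refine setIntegral_congr_fun hm0 (fun ω hω => ?_)
    simp only [Set.mem_setOf_eq] at hω
    rw [hCons, hNA, hω]; ring
  have hsplit : (∫ ω in {ω | A ω = 1}, (Y1p1 ω - Y0p0 ω) ∂μ)
      = (∫ ω in {ω | A ω = 1}, (Y1p1 ω - Y1p0 ω) ∂μ)
        + ∫ ω in {ω | A ω = 1}, (Y1p0 ω - Y0p0 ω) ∂μ := by
    simp_rw [show ∀ ω, Y1p1 ω - Y0p0 ω = (Y1p1 ω - Y1p0 ω) + (Y1p0 ω - Y0p0 ω) from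
      fun ω => by ring]
    exact integral_add ((hY1p1.sub hY1p0).restrict) ((hY1p0.sub hY0p0).restrict)
  rw [h1, h0, hsplit, add_div, ← hPT]
  ring
end

section
/- If M0 is sufficient for Y0 (E(Ẏ0^0|A,M0)=E(Ẏ0^0|M0) a.s.) and additive homogeneous confounding relative to the larger set M holds in the strong form E(Ẏ1^0|A,M)=E(Ẏ0^0|A,M) a.s., then E(Ẏ1^0|A,M0) = E(Ẏ1^0|M0) a.s. and moreover E(Ẏ1^0|M0) = E(Ẏ0^0|M0) a.s. -/
open MeasureTheory

/-- If `M0` is sufficient for `Y0` (`E(Ẏ0^0|A,M0) = E(Ẏ0^0|M0)` a.s.)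
and additive homogeneous confounding relative to the larger set `M` holds in the strong
form `E(Ẏ1^0|A,M) = E(Ẏ0^0|A,M)` a.s., then `E(Ẏ1^0|A,M0) = E(Ẏ1^0|M0)` a.s. and
moreover `E(Ẏ1^0|M0) = E(Ẏ0^0|M0)` a.s. -/
theorem stmt_19 {Ω : Type*} [MeasurableSpace Ω] {β γ : Type*} [MeasurableSpace β]
    [MeasurableSpace γ] (μ : Measure Ω) [IsProbabilityMeasure μ]
    (A Y0 Y1 : Ω → ℝ) (M : Ω → β) (M0 : Ω → γ)
    (hAmeas : Measurable A) (hMmeas : Measurable M) (hM0meas : Measurable M0)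
    (hY0 : Integrable Y0 μ) (hY1 : Integrable Y1 μ)
    -- σ(A, M0) ⊆ σ(A, M)
    (hsub : MeasurableSpace.comap (fun ω => (A ω, M0 ω)) inferInstance
        ≤ MeasurableSpace.comap (fun ω => (A ω, M ω)) inferInstance)
    -- M0 is sufficient for Y0 (centered form)
    (hsuffM0 : μ[fun ω => Y0 ω - ∫ x, Y0 x ∂μ |
          MeasurableSpace.comap (fun ω => (A ω, M0 ω)) inferInstance]
        =ᵐ[μ] μ[fun ω => Y0 ω - ∫ x, Y0 x ∂μ | MeasurableSpace.comap M0 inferInstance])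
    -- strong additive homogeneous confounding relative to M
    (hAHC : μ[fun ω => Y1 ω - ∫ x, Y1 x ∂μ |
          MeasurableSpace.comap (fun ω => (A ω, M ω)) inferInstance]
        =ᵐ[μ] μ[fun ω => Y0 ω - ∫ x, Y0 x ∂μ |
          MeasurableSpace.comap (fun ω => (A ω, M ω)) inferInstance]) :
    (μ[fun ω => Y1 ω - ∫ x, Y1 x ∂μ |
          MeasurableSpace.comap (fun ω => (A ω, M0 ω)) inferInstance]
        =ᵐ[μ] μ[fun ω => Y1 ω - ∫ x, Y1 x ∂μ | MeasurableSpace.comap M0 inferInstance])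
    ∧ (μ[fun ω => Y1 ω - ∫ x, Y1 x ∂μ | MeasurableSpace.comap M0 inferInstance]
        =ᵐ[μ] μ[fun ω => Y0 ω - ∫ x, Y0 x ∂μ | MeasurableSpace.comap M0 inferInstance]) := by
  set m0 := MeasurableSpace.comap M0 (inferInstance : MeasurableSpace γ) with hm0def
  set mAM0 := MeasurableSpace.comap (fun ω => (A ω, M0 ω))
    (inferInstance : MeasurableSpace (ℝ × γ)) with hmAM0def
  set mAM := MeasurableSpace.comap (fun ω => (A ω, M ω))
    (inferInstance : MeasurableSpace (ℝ × β)) with hmAMdef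
  set f1 : Ω → ℝ := fun ω => Y1 ω - ∫ x, Y1 x ∂μ with hf1
  set f0 : Ω → ℝ := fun ω => Y0 ω - ∫ x, Y0 x ∂μ with hf0
  have hm0 := hM0meas.comap_le
  have hmAM0 := (hAmeas.prodMk hM0meas).comap_le
  have hmAM := (hAmeas.prodMk hMmeas).comap_le
  have hm0_le : m0 ≤ mAM0 := by
    intro s hs
    obtain ⟨t, ht, rfl⟩ := hs
    refine ⟨Set.univ ×ˢ t, MeasurableSet.univ.prod ht, ?_⟩
    ext ω; simp
  -- tower: E[f1 | mAM0] = E[E[f1 | mAM] | mAM0]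
  have t1 : μ[f1 | mAM0] =ᵐ[μ] μ[μ[f1 | mAM] | mAM0] :=
    (condExp_condExp_of_le hsub hmAM).symm
  have t2 : μ[μ[f1 | mAM] | mAM0] =ᵐ[μ] μ[μ[f0 | mAM] | mAM0] :=
    condExp_congr_ae hAHC
  have t3 : μ[μ[f0 | mAM] | mAM0] =ᵐ[μ] μ[f0 | mAM0] :=
    condExp_condExp_of_le hsub hmAM
  have h1 : μ[f1 | mAM0] =ᵐ[μ] μ[f0 | m0] :=
    ((t1.trans t2).trans t3).trans hsuffM0
  -- tower down to m0
  have s1 : μ[f1 | m0] =ᵐ[μ] μ[μ[f1 | mAM0] | m0] :=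
    (condExp_condExp_of_le hm0_le hmAM0).symm
  have s2 : μ[μ[f1 | mAM0] | m0] =ᵐ[μ] μ[μ[f0 | m0] | m0] :=
    condExp_congr_ae h1
  have s3 : μ[μ[f0 | m0] | m0] =ᵐ[μ] μ[f0 | m0] :=
    condExp_condExp_of_le le_rfl hm0
  have h2 : μ[f1 | m0] =ᵐ[μ] μ[f0 | m0] := (s1.trans s2).trans s3
  exact ⟨h1.trans h2.symm, h2⟩
end
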